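/- arXiv:1509.03547 — 4 statements merged into one kernel-verified Lean document; each statement's English description precedes it below -/
import Mathlib

section
/- Let k ≥ 4 be a natural number. The 4-element subsets of ZMod k are partitioned by the translation action as follows: the classes [x,y,z], where (x,y,z) ranges over all triples of integers with 1 ≤ x ≤ ⌊k/4⌋, x ≤ y, x ≤ z, 2x+y+z < k, and additionally y ≤ ⌊(k−2x)/2⌋ whenever x = z, together with (in case 4 ∣ k) the additional class [k/4,k/4,k/4], are pairwise disjoint and their union is the set of all 4-element subsets of ZMod k; moreover there are no further classes distinct from these. -/
/-!
Reading the four points of a 4-subset of `ZMod k` in cyclic order from one of them gives four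
positive gaps `(x, y, z, w)` with `x + y + z + w = k`; the subset lies in `[x,y,z]`, and starting
from the other points only rotates the gap cycle. Conversely a subset with base point `i` and
gaps `(x, y, z)` with `x + y + z < k` determines its gaps, so two classes `[p]`, `[q]` meet only
if `q` is a rotation of `p`. The triples of `classIndex k` are exactly the canonical rotations:
`x` is a minimal gap, strictly smaller than the preceding gap `w`, and if the opposite gap `z`
also equals `x` then `y ≤ w`; or all four gaps are equal. (In `classIndex`, `2x+y+z < k` says
`x < w`, and for `x = z` the bound `y ≤ ⌊(k-2x)/2⌋` says `y ≤ w`.) Every gap cycle has a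
canonical rotation, and any two canonical rotations of one cycle give the same triple.
-/

/-- The equivalence class `[x,y,z]`: the translation orbit of the subset
`{0, x, x+y, x+y+z}` of `ZMod k`, i.e. all subsets `{i, i+x, i+x+y, i+x+y+z}`. -/
def transClass (k : ℕ) (x y z : ℕ) : Set (Finset (ZMod k)) :=
  { T | ∃ i : ZMod k,
      T = {i, i + (x : ZMod k), i + (x : ZMod k) + (y : ZMod k),
           i + (x : ZMod k) + (y : ZMod k) + (z : ZMod k)} }

/-- The orbit of a subset `T ⊆ ZMod k` under the translation action. -/
def transOrbit (k : ℕ) (T : Finset (ZMod k)) : Set (Finset (ZMod k)) :=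
  { S | ∃ d : ZMod k, S = T.image (· + d) }

/-- The index set of class representatives: triples `(x,y,z)` with
`1 ≤ x ≤ ⌊k/4⌋`, `x ≤ y`, `x ≤ z`, `2x+y+z < k`, and `y ≤ ⌊(k-2x)/2⌋` whenever `x = z`;
together with, in case `4 ∣ k`, the additional triple `(k/4, k/4, k/4)`. -/
def classIndex (k : ℕ) : Set (ℕ × ℕ × ℕ) :=
  { p | 1 ≤ p.1 ∧ p.1 ≤ k / 4 ∧ p.1 ≤ p.2.1 ∧ p.1 ≤ p.2.2 ∧
        2 * p.1 + p.2.1 + p.2.2 < k ∧ (p.1 = p.2.2 → p.2.1 ≤ (k - 2 * p.1) / 2) }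
    ∪ (if 4 ∣ k then {(k / 4, k / 4, k / 4)} else ∅)

def IsGapTriple (k : ℕ) (p : ℕ × ℕ × ℕ) : Prop :=
  0 < p.1 ∧ 0 < p.2.1 ∧ 0 < p.2.2 ∧ p.1 + p.2.1 + p.2.2 < k

def IsCanonicalGaps (x y z w : ℕ) : Prop :=
  x ≤ y ∧ x ≤ z ∧ x < w ∧ (x = z → y ≤ w)

def rotateGaps (k : ℕ) (p : ℕ × ℕ × ℕ) : ℕ × ℕ × ℕ :=
  (p.2.1, p.2.2, k - (p.1 + p.2.1 + p.2.2))

def gapRotations (k : ℕ) (p : ℕ × ℕ × ℕ) : Finset (ℕ × ℕ × ℕ) :=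
  {p, rotateGaps k p, rotateGaps k (rotateGaps k p),
    rotateGaps k (rotateGaps k (rotateGaps k p))}

section GapArithmetic

variable {k x y z w : ℕ}

lemma isCanonicalGaps_rotation_or_all_eq (x y z w : ℕ) :
    IsCanonicalGaps x y z w ∨ IsCanonicalGaps y z w x ∨ IsCanonicalGaps z w x y ∨
      IsCanonicalGaps w x y z ∨ (x = y ∧ y = z ∧ z = w) := by
  unfold IsCanonicalGaps; omega

lemma rotateGaps_of_add_eq (h : x + y + z + w = k) : rotateGaps k (x, y, z) = (y, z, w) := by
  simp only [rotateGaps, Prod.mk.injEq, true_and]; omega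

lemma gapRotations_of_add_eq (h : x + y + z + w = k) :
    gapRotations k (x, y, z) = {(x, y, z), (y, z, w), (z, w, x), (w, x, y)} := by
  rw [gapRotations, rotateGaps_of_add_eq h, rotateGaps_of_add_eq (by omega : y + z + w + x = k),
    rotateGaps_of_add_eq (by omega : z + w + x + y = k)]

lemma isGapTriple_iff (h : x + y + z + w = k) :
    IsGapTriple k (x, y, z) ↔ 0 < x ∧ 0 < y ∧ 0 < z ∧ 0 < w := by
  simp only [IsGapTriple]; omega

lemma mem_classIndex_iff (hx : 0 < x) (h : x + y + z + w = k) :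
    (x, y, z) ∈ classIndex k ↔ IsCanonicalGaps x y z w ∨ (x = y ∧ y = z ∧ z = w) := by
  simp only [classIndex, Set.mem_union, Set.mem_ofPred_eq, IsCanonicalGaps]
  split_ifs <;>
    simp only [Set.mem_singleton_iff, Prod.mk.injEq, Set.mem_empty_iff_false, or_false] <;>
    omega

lemma exists_add_eq_of_isGapTriple (hp : IsGapTriple k (x, y, z)) : ∃ w, x + y + z + w = k :=
  ⟨k - (x + y + z), by simp only [IsGapTriple] at hp; omega⟩

lemma IsGapTriple.of_mem_classIndex (hk : 0 < k) {p : ℕ × ℕ × ℕ}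
    (hp : p ∈ classIndex k) : IsGapTriple k p := by
  simp only [classIndex, Set.mem_union, Set.mem_ofPred_eq] at hp
  split_ifs at hp <;>
    simp only [Set.mem_singleton_iff, Set.mem_empty_iff_false, or_false, Prod.ext_iff] at hp <;>
    simp only [IsGapTriple] <;> omega

lemma IsGapTriple.of_mem_gapRotations {p q : ℕ × ℕ × ℕ} (hp : IsGapTriple k p)
    (hq : q ∈ gapRotations k p) : IsGapTriple k q := by
  obtain ⟨x, y, z⟩ := p
  obtain ⟨w, hw⟩ := exists_add_eq_of_isGapTriple hp
  rw [gapRotations_of_add_eq hw] at hq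
  rw [isGapTriple_iff hw] at hp
  simp only [Finset.mem_insert, Finset.mem_singleton] at hq
  rcases hq with rfl | rfl | rfl | rfl
  · exact (isGapTriple_iff hw).2 hp
  · exact (isGapTriple_iff (by omega : y + z + w + x = k)).2 (by omega)
  · exact (isGapTriple_iff (by omega : z + w + x + y = k)).2 (by omega)
  · exact (isGapTriple_iff (by omega : w + x + y + z = k)).2 (by omega)

lemma exists_mem_gapRotations_mem_classIndex {p : ℕ × ℕ × ℕ} (hp : IsGapTriple k p) :
    ∃ q ∈ gapRotations k p, q ∈ classIndex k := by
  obtain ⟨x, y, z⟩ := p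
  obtain ⟨w, hw⟩ := exists_add_eq_of_isGapTriple hp
  obtain ⟨hx, hy, hz, hw0⟩ := (isGapTriple_iff hw).1 hp
  rw [gapRotations_of_add_eq hw]
  rcases isCanonicalGaps_rotation_or_all_eq x y z w with h | h | h | h | ⟨rfl, rfl, rfl⟩
  · exact ⟨_, by simp, (mem_classIndex_iff hx hw).2 (.inl h)⟩
  · exact ⟨_, by simp, (mem_classIndex_iff hy (by omega)).2 (.inl h)⟩
  · exact ⟨_, by simp, (mem_classIndex_iff hz (by omega)).2 (.inl h)⟩
  · exact ⟨_, by simp, (mem_classIndex_iff hw0 (by omega)).2 (.inl h)⟩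
  · exact ⟨_, by simp, (mem_classIndex_iff hx hw).2 (.inr ⟨rfl, rfl, rfl⟩)⟩

lemma eq_of_mem_gapRotations_of_mem_classIndex (hk : 0 < k) {p q : ℕ × ℕ × ℕ}
    (hp : p ∈ classIndex k) (hq : q ∈ classIndex k) (hpq : q ∈ gapRotations k p) : p = q := by
  obtain ⟨x, y, z⟩ := p
  have hp' := IsGapTriple.of_mem_classIndex hk hp
  obtain ⟨w, hw⟩ := exists_add_eq_of_isGapTriple hp'
  obtain ⟨hx, hy, hz, hw0⟩ := (isGapTriple_iff hw).1 hp'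
  rw [mem_classIndex_iff hx hw] at hp
  rw [gapRotations_of_add_eq hw] at hpq
  simp only [Finset.mem_insert, Finset.mem_singleton] at hpq
  rcases hpq with rfl | rfl | rfl | rfl
  · rfl
  · rw [mem_classIndex_iff (w := x) hy (by omega)] at hq
    simp only [IsCanonicalGaps, Prod.mk.injEq] at hp hq ⊢; omega
  · rw [mem_classIndex_iff (w := y) hz (by omega)] at hq
    simp only [IsCanonicalGaps, Prod.mk.injEq] at hp hq ⊢; omega
  · rw [mem_classIndex_iff (w := z) hw0 (by omega)] at hq
    simp only [IsCanonicalGaps, Prod.mk.injEq] at hp hq ⊢; omega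

end GapArithmetic

lemma card_partialSums {x y z : ℕ} (hx : 0 < x) (hy : 0 < y) (hz : 0 < z) :
    ({0, x, x + y, x + y + z} : Finset ℕ).card = 4 :=
  Finset.card_eq_four.2
    ⟨_, _, _, _, by omega, by omega, by omega, by omega, by omega, by omega, rfl⟩

lemma eq_of_partialSums_eq {x y z x' y' z' : ℕ} (hx : 0 < x) (hy : 0 < y) (hz : 0 < z)
    (hx' : 0 < x') (hy' : 0 < y') (hz' : 0 < z')
    (h : ({0, x, x + y, x + y + z} : Finset ℕ) = {0, x', x' + y', x' + y' + z'}) :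
    (x, y, z) = (x', y', z') := by
  simp only [Finset.ext_iff, Finset.mem_insert, Finset.mem_singleton] at h
  have h1 := (h x).1 (by simp)
  have h2 := (h (x + y)).1 (by simp)
  have h3 := (h (x + y + z)).1 (by simp)
  have h1' := (h x').2 (by simp)
  have h3' := (h (x' + y' + z')).2 (by simp)
  simp only [Prod.mk.injEq]
  omega

def gapSet {k : ℕ} (i : ZMod k) (p : ℕ × ℕ × ℕ) : Finset (ZMod k) :=
  {i, i + p.1, i + p.1 + p.2.1, i + p.1 + p.2.1 + p.2.2}

section GapSets

variable {k : ℕ}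

lemma mem_transClass_iff {p : ℕ × ℕ × ℕ} {T : Finset (ZMod k)} :
    T ∈ transClass k p.1 p.2.1 p.2.2 ↔ ∃ i, T = gapSet i p :=
  Iff.rfl

lemma gapSet_rotate {x y z w : ℕ} (h : x + y + z + w = k) (i : ZMod k) :
    gapSet i (x, y, z) = gapSet (i + (x : ZMod k)) (y, z, w) := by
  have hsum : (x : ZMod k) + y + z + w = 0 := by
    rw [← ZMod.natCast_self k, ← h]; push_cast; rfl
  have hi : i + x + y + z + (w : ZMod k) = i := by linear_combination hsum
  simp only [gapSet, hi]
  ext t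
  simp only [Finset.mem_insert, Finset.mem_singleton]
  tauto

lemma exists_gapSet_eq_of_mem_gapRotations {p q : ℕ × ℕ × ℕ} (hp : IsGapTriple k p)
    (hq : q ∈ gapRotations k p) (i : ZMod k) : ∃ j, gapSet i p = gapSet j q := by
  obtain ⟨x, y, z⟩ := p
  obtain ⟨w, hw⟩ := exists_add_eq_of_isGapTriple hp
  have E1 := gapSet_rotate hw i
  have E2 := gapSet_rotate (by omega : y + z + w + x = k) (i + (x : ZMod k))
  have E3 := gapSet_rotate (by omega : z + w + x + y = k) (i + (x : ZMod k) + y)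
  rw [gapRotations_of_add_eq hw] at hq
  simp only [Finset.mem_insert, Finset.mem_singleton] at hq
  rcases hq with rfl | rfl | rfl | rfl
  exacts [⟨i, rfl⟩, ⟨_, E1⟩, ⟨_, E1.trans E2⟩, ⟨_, E1.trans (E2.trans E3)⟩]

lemma exists_mem_gapRotations_gapSet_eq_of_mem {p : ℕ × ℕ × ℕ} (hp : IsGapTriple k p)
    {i j : ZMod k} (hj : j ∈ gapSet i p) :
    ∃ q ∈ gapRotations k p, gapSet i p = gapSet j q := by
  obtain ⟨x, y, z⟩ := p
  obtain ⟨w, hw⟩ := exists_add_eq_of_isGapTriple hp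
  have E1 := gapSet_rotate hw i
  have E2 := gapSet_rotate (by omega : y + z + w + x = k) (i + (x : ZMod k))
  have E3 := gapSet_rotate (by omega : z + w + x + y = k) (i + (x : ZMod k) + y)
  rw [gapRotations_of_add_eq hw]
  simp only [gapSet, Finset.mem_insert, Finset.mem_singleton] at hj
  rcases hj with rfl | rfl | rfl | rfl
  exacts [⟨_, by simp, rfl⟩, ⟨_, by simp, E1⟩, ⟨_, by simp, E1.trans E2⟩,
    ⟨_, by simp, E1.trans (E2.trans E3)⟩]

lemma image_add_gapSet {p : ℕ × ℕ × ℕ} (i d : ZMod k) :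
    (gapSet i p).image (· + d) = gapSet (i + d) p := by
  simp only [gapSet, Finset.image_insert, Finset.image_singleton, add_right_comm _ d]

lemma transOrbit_eq_of_mem_transClass {p : ℕ × ℕ × ℕ} {T : Finset (ZMod k)}
    (hT : T ∈ transClass k p.1 p.2.1 p.2.2) : transOrbit k T = transClass k p.1 p.2.1 p.2.2 := by
  obtain ⟨i, rfl⟩ := mem_transClass_iff.1 hT
  ext S
  simp only [transOrbit, Set.mem_ofPred_eq, mem_transClass_iff, image_add_gapSet]
  exact ⟨fun ⟨d, hd⟩ ↦ ⟨i + d, hd⟩,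
    fun ⟨j, hj⟩ ↦ ⟨j - i, by rwa [add_sub_cancel]⟩⟩

lemma image_val_sub_gapSet {x y z : ℕ} (h : x + y + z < k) (i : ZMod k) :
    (gapSet i (x, y, z)).image (fun t ↦ (t - i).val) = {0, x, x + y, x + y + z} := by
  simp only [gapSet, Finset.image_insert, Finset.image_singleton, add_assoc, add_sub_cancel_left,
    sub_self, ZMod.val_zero, ← Nat.cast_add]
  rw [ZMod.val_natCast_of_lt (by omega), ZMod.val_natCast_of_lt (by omega),
    ZMod.val_natCast_of_lt (by omega)]

lemma card_gapSet [NeZero k] {p : ℕ × ℕ × ℕ} (hp : IsGapTriple k p) (i : ZMod k) :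
    (gapSet i p).card = 4 := by
  obtain ⟨x, y, z⟩ := p
  obtain ⟨hx, hy, hz, hs⟩ := hp
  rw [← Finset.card_image_of_injective _
      ((ZMod.val_injective k).comp (sub_left_injective (b := i))),
    Function.comp_def, image_val_sub_gapSet hs]
  exact card_partialSums hx hy hz

lemma eq_of_gapSet_eq {p q : ℕ × ℕ × ℕ} (hp : IsGapTriple k p) (hq : IsGapTriple k q)
    {i : ZMod k} (h : gapSet i p = gapSet i q) : p = q := by
  obtain ⟨x, y, z⟩ := p
  obtain ⟨x', y', z'⟩ := q
  obtain ⟨hx, hy, hz, hs⟩ := hp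
  obtain ⟨hx', hy', hz', hs'⟩ := hq
  have := congrArg (Finset.image (fun t ↦ (t - i).val)) h
  rw [image_val_sub_gapSet hs, image_val_sub_gapSet hs'] at this
  exact eq_of_partialSums_eq hx hy hz hx' hy' hz' this

end GapSets

lemma gapSet_natCast_sub {k a b c d : ℕ} (hab : a ≤ b) (hbc : b ≤ c) (hcd : c ≤ d) :
    gapSet (a : ZMod k) (b - a, c - b, d - c) =
      {(a : ZMod k), (b : ZMod k), (c : ZMod k), (d : ZMod k)} := by
  simp only [gapSet, Nat.cast_sub hab, Nat.cast_sub hbc, Nat.cast_sub hcd, add_sub_cancel]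

lemma exists_isGapTriple_mem_transClass {k : ℕ} [NeZero k] {T : Finset (ZMod k)}
    (hT : T.card = 4) :
    ∃ p, IsGapTriple k p ∧ T ∈ transClass k p.1 p.2.1 p.2.2 := by
  set S := T.image ZMod.val
  have hS : S.card = 4 := by rw [Finset.card_image_of_injective _ (ZMod.val_injective k), hT]
  set f := S.orderEmbOfFin hS
  have hSf : S = {f 0, f 1, f 2, f 3} := by
    rw [← S.image_orderEmbOfFin_univ hS]
    simp [Fin.univ_succ, f]
  have hTS : T = S.image Nat.cast := by simp [S, Finset.image_image, Function.comp_def]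
  have hlt : f 3 < k := by
    obtain ⟨t, -, ht⟩ := Finset.mem_image.1 (S.orderEmbOfFin_mem hS 3)
    exact ht ▸ ZMod.val_lt t
  have h01 : f 0 < f 1 := f.strictMono (by decide)
  have h12 : f 1 < f 2 := f.strictMono (by decide)
  have h23 : f 2 < f 3 := f.strictMono (by decide)
  refine ⟨(f 1 - f 0, f 2 - f 1, f 3 - f 2), ?_, mem_transClass_iff.2 ⟨(f 0 : ZMod k), ?_⟩⟩
  · simp only [IsGapTriple]; omega
  · rw [hTS, hSf, gapSet_natCast_sub h01.le h12.le h23.le]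
    simp

lemma exists_mem_classIndex_mem_transClass {k : ℕ} [NeZero k] {T : Finset (ZMod k)}
    (hT : T.card = 4) : ∃ p ∈ classIndex k, T ∈ transClass k p.1 p.2.1 p.2.2 := by
  obtain ⟨p, hp, hTp⟩ := exists_isGapTriple_mem_transClass hT
  obtain ⟨q, hq, hqc⟩ := exists_mem_gapRotations_mem_classIndex hp
  obtain ⟨i, rfl⟩ := mem_transClass_iff.1 hTp
  obtain ⟨j, hj⟩ := exists_gapSet_eq_of_mem_gapRotations hp hq i
  exact ⟨q, hqc, mem_transClass_iff.2 ⟨j, hj⟩⟩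

lemma eq_of_mem_transClass_of_mem_classIndex {k : ℕ} (hk : 0 < k) {p q : ℕ × ℕ × ℕ}
    (hp : p ∈ classIndex k) (hq : q ∈ classIndex k) {T : Finset (ZMod k)}
    (hTp : T ∈ transClass k p.1 p.2.1 p.2.2) (hTq : T ∈ transClass k q.1 q.2.1 q.2.2) :
    p = q := by
  have hp' := IsGapTriple.of_mem_classIndex hk hp
  obtain ⟨i, rfl⟩ := mem_transClass_iff.1 hTp
  obtain ⟨j, hj⟩ := mem_transClass_iff.1 hTq
  have hji : j ∈ gapSet i p := hj ▸ by simp [gapSet]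
  obtain ⟨r, hr, hir⟩ := exists_mem_gapRotations_gapSet_eq_of_mem hp' hji
  have hrq : r = q := eq_of_gapSet_eq (hp'.of_mem_gapRotations hr)
    (IsGapTriple.of_mem_classIndex hk hq) (hir.symm.trans hj)
  exact eq_of_mem_gapRotations_of_mem_classIndex hk hp hq (hrq ▸ hr)

/-- The classes `[x,y,z]` indexed by `classIndex k` are pairwise disjoint, their union is
the set of all 4-element subsets of `ZMod k`, and every translation orbit of a 4-element
subset of `ZMod k` is one of these classes (there are no further classes). -/
theorem transClass_partition (k : ℕ) (hk : 4 ≤ k) :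
    (∀ p ∈ classIndex k, ∀ q ∈ classIndex k, p ≠ q →
      Disjoint (transClass k p.1 p.2.1 p.2.2) (transClass k q.1 q.2.1 q.2.2)) ∧
    (⋃ p ∈ classIndex k, transClass k p.1 p.2.1 p.2.2)
      = { T : Finset (ZMod k) | T.card = 4 } ∧
    (∀ T : Finset (ZMod k), T.card = 4 →
      ∃ p ∈ classIndex k, transOrbit k T = transClass k p.1 p.2.1 p.2.2) := by
  have hk0 : 0 < k := by omega
  have : NeZero k := ⟨hk0.ne'⟩
  refine ⟨fun p hp q hq hpq ↦ Set.disjoint_left.2 fun T hTp hTq ↦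
    hpq (eq_of_mem_transClass_of_mem_classIndex hk0 hp hq hTp hTq), ?_, fun T hT ↦ ?_⟩
  · ext T
    simp only [Set.mem_iUnion, Set.mem_ofPred_eq, exists_prop]
    refine ⟨fun ⟨p, hp, hTp⟩ ↦ ?_, exists_mem_classIndex_mem_transClass⟩
    obtain ⟨i, rfl⟩ := mem_transClass_iff.1 hTp
    exact card_gapSet (IsGapTriple.of_mem_classIndex hk0 hp) i
  · obtain ⟨p, hp, hTp⟩ := exists_mem_classIndex_mem_transClass hT
    exact ⟨p, hp, transOrbit_eq_of_mem_transClass hTp⟩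
end

section
/- Let k ≥ 5 be an odd natural number. Then every translation-orbit of 4-element subsets of ZMod k has exactly k elements, and the total number of such orbits equals (k−1)(k−2)(k−3)/24. -/
/-- The set of translation orbits of 4-element subsets of `ZMod k`. -/
def transOrbits4 (k : ℕ) : Set (Set (Finset (ZMod k))) :=
  { O | ∃ T : Finset (ZMod k), T.card = 4 ∧ O = transOrbit k T }

/-! The sum of the elements of `T + d` is `∑ T + 4 • d`, and `4` is a unit modulo an odd `k`, so the
translates of a 4-subset `T` are pairwise distinct and its orbit has `k` elements. The orbits
partition the `k.choose 4` four-element subsets, so there are `k.choose 4 / k` of them. -/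

open Pointwise

namespace AddAction

variable {G α : Type*} [AddGroup G] [AddAction G α]

theorem ncard_image_orbit_mul {s : Set α} (hs : s.Finite)
    (hinv : ∀ g : G, ∀ x ∈ s, g +ᵥ x ∈ s) {n : ℕ} (hn : ∀ x ∈ s, (orbit G x).ncard = n) :
    (orbit G '' s).ncard * n = s.ncard := by
  classical
  have hsub : ∀ x ∈ s, orbit G x ⊆ s := by
    rintro x hx _ ⟨g, rfl⟩
    exact hinv g x hx
  -- Double count the incidences `a ∈ B`: each point of `s` lies in exactly one orbit.
  have hincidence := Finset.card_mul_eq_card_mul (fun a B => a ∈ B) (s := hs.toFinset)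
    (t := (hs.image (orbit G)).toFinset) (m := 1) (n := n) ?_ ?_
  · rw [Set.ncard_eq_toFinset_card _ hs, Set.ncard_eq_toFinset_card _ (hs.image _), ← hincidence, mul_one]
  · intro a ha
    rw [Set.Finite.mem_toFinset] at ha
    rw [Finset.card_eq_one]
    refine ⟨orbit G a, ?_⟩
    ext B
    simp only [Finset.mem_bipartiteAbove, Set.Finite.mem_toFinset, Set.mem_image,
      Finset.mem_singleton]
    constructor
    · rintro ⟨⟨x, -, rfl⟩, hax⟩
      exact (orbit_eq_iff.mpr hax).symm
    · rintro rfl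
      exact ⟨⟨a, ha, rfl⟩, mem_orbit_self a⟩
  · intro B hB
    simp only [Set.Finite.mem_toFinset, Set.mem_image] at hB
    obtain ⟨x, hx, rfl⟩ := hB
    rw [← hn x hx, ← Set.ncard_coe_finset]
    congr 1
    ext a
    simpa using fun h => hsub x hx h

end AddAction

section FinsetTranslate

variable {G : Type*} [AddCommGroup G] [DecidableEq G]

theorem Finset.sum_vadd_finset (d : G) (T : Finset G) :
    ∑ x ∈ d +ᵥ T, x = ∑ x ∈ T, x + T.card • d := by
  rw [Finset.vadd_finset_def, Finset.sum_image fun a _ b _ h => vadd_left_cancel d h]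
  simp only [vadd_eq_add]
  rw [Finset.sum_add_distrib, Finset.sum_const, add_comm]

theorem Finset.vadd_finset_left_injective {T : Finset G}
    (hT : Function.Injective fun d : G => T.card • d) :
    Function.Injective fun d : G => d +ᵥ T := by
  intro d₁ d₂ h
  have hsum := congrArg (fun S => ∑ x ∈ S, x) h
  simp only [Finset.sum_vadd_finset] at hsum
  exact hT (add_left_cancel hsum)

theorem Finset.ncard_orbit_eq_natCard [Finite G] {T : Finset G}
    (hT : Function.Injective fun d : G => T.card • d) :
    (AddAction.orbit G T).ncard = Nat.card G :=
  Set.ncard_range_of_injective (Finset.vadd_finset_left_injective hT)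

end FinsetTranslate

theorem transOrbit_eq_orbit (k : ℕ) (T : Finset (ZMod k)) :
    transOrbit k T = AddAction.orbit (ZMod k) T := by
  ext S
  simp [transOrbit, AddAction.mem_orbit_iff, Finset.vadd_finset_def, add_comm, eq_comm]

theorem ncard_transOrbit_of_coprime {k : ℕ} [NeZero k] {T : Finset (ZMod k)}
    (hT : T.card.Coprime k) : (transOrbit k T).ncard = k := by
  have hunit : IsUnit (T.card : ZMod k) := (ZMod.isUnit_iff_coprime _ k).mpr hT
  rw [transOrbit_eq_orbit, Finset.ncard_orbit_eq_natCard, Nat.card_zmod]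
  simpa only [nsmul_eq_mul] using hunit.mul_right_injective

theorem Set.ncard_setOf_finset_card_eq {α : Type*} [Fintype α] (n : ℕ) :
    {T : Finset α | T.card = n}.ncard = (Fintype.card α).choose n := by
  classical
  have : {T : Finset α | T.card = n} = ↑(Finset.powersetCard n (Finset.univ : Finset α)) := by
    ext T
    simp
  rw [this, Set.ncard_coe_finset, Finset.card_powersetCard, Finset.card_univ]

theorem Nat.choose_four_mul (n : ℕ) : n.choose 4 * 24 = n * (n - 1) * (n - 2) * (n - 3) := by
  have h := Nat.descFactorial_eq_factorial_mul_choose n 4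
  simp only [Nat.descFactorial_succ, Nat.descFactorial_zero, Nat.factorial, Nat.sub_zero,
    Nat.succ_eq_add_one] at h
  norm_num at h
  rw [mul_comm, ← h]
  ring

theorem transOrbits4_odd_general (k : ℕ) (hodd : Odd k) :
    (∀ T : Finset (ZMod k), T.card = 4 → (transOrbit k T).ncard = k) ∧
    (transOrbits4 k).ncard = (k - 1) * (k - 2) * (k - 3) / 24 := by
  have : NeZero k := ⟨hodd.pos.ne'⟩
  have hcoprime : Nat.Coprime 4 k := by
    simpa using Nat.Coprime.pow_left 2 hodd.coprime_two_left
  have horbit (T : Finset (ZMod k)) (hT : T.card = 4) : (transOrbit k T).ncard = k :=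
    ncard_transOrbit_of_coprime (hT ▸ hcoprime)
  refine ⟨horbit, ?_⟩
  have himage : transOrbits4 k = AddAction.orbit (ZMod k) '' {T | T.card = 4} := by
    ext O
    simp [transOrbits4, transOrbit_eq_orbit, eq_comm]
  have hcount := AddAction.ncard_image_orbit_mul (Set.toFinite {T : Finset (ZMod k) | T.card = 4})
    (fun g T hT => by simpa using hT)
    (fun T hT => transOrbit_eq_orbit k T ▸ horbit T hT)
  rw [← himage, Set.ncard_setOf_finset_card_eq, ZMod.card] at hcount
  have h24 : (transOrbits4 k).ncard * 24 = (k - 1) * (k - 2) * (k - 3) := by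
    refine Nat.eq_of_mul_eq_mul_left hodd.pos ?_
    calc k * ((transOrbits4 k).ncard * 24) = (transOrbits4 k).ncard * k * 24 := by ring
      _ = k * (k - 1) * (k - 2) * (k - 3) := by rw [hcount, Nat.choose_four_mul]
      _ = k * ((k - 1) * (k - 2) * (k - 3)) := by ring
  rw [← h24, Nat.mul_div_cancel _ (by norm_num)]

/-- For odd `k ≥ 5`, every translation orbit of 4-element subsets of `ZMod k` has exactly
`k` elements, and the total number of orbits is `(k-1)(k-2)(k-3)/24`. -/
theorem transOrbits4_odd (k : ℕ) (hk : 5 ≤ k) (hodd : Odd k) :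
    (∀ T : Finset (ZMod k), T.card = 4 → (transOrbit k T).ncard = k) ∧
    (transOrbits4 k).ncard = (k - 1) * (k - 2) * (k - 3) / 24 :=
  transOrbits4_odd_general k hodd
end

section
/- Let G be a finite group acting on a finite type X with |X| = g, let k ≥ 4, and let u, v : ZMod k → X. Suppose that for every injective map r : Fin 4 → ZMod k and every non-constant tuple w : Fin 4 → X there exist j ∈ ZMod k, a vector s ∈ {u, v}, and a group element a ∈ G such that s(r i − j) = a • w i for all i ∈ Fin 4 (i.e., every 4-row subarray of the 2k-column circulant matrix built from u and v contains a representative of every G-orbit of non-constant 4-tuples from X). Then there exists a covering array 4-CA(2·k·|G| + g, k, g). -/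
/-- A covering array of strength 4 with `n` columns, `k` rows, over an alphabet `X`:
for every choice of 4 distinct rows and every 4-tuple of symbols, some column realizes
that tuple on those rows. -/
def IsCoveringArray4On (X : Type*) (n k : ℕ) (A : Fin k → Fin n → X) : Prop :=
  ∀ r : Fin 4 → Fin k, Function.Injective r →
    ∀ w : Fin 4 → X, ∃ c : Fin n, ∀ i : Fin 4, A (r i) c = w i

/-!
Develop the starter vectors: take as columns all translates `x ↦ s (x - j)` of each starter `s`,
each moved by every group element, together with one constant column per symbol. A non-constant
tuple on rows `r` is some `a • w` read off a translate, so the column built from `a⁻¹` shows `w`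
itself; a constant tuple is shown by a constant column. Counting columns gives `2·k·|G| + g`.
-/

open Function

def CoversTuples (t : ℕ) {R C X : Type*} (A : R → C → X) : Prop :=
  ∀ r : Fin t → R, Injective r → ∀ w : Fin t → X, ∃ c, ∀ i, A (r i) c = w i

namespace CoversTuples

variable {t : ℕ} {R R' C C' X : Type*} {A : R → C → X}

theorem comp_rows (hA : CoversTuples t A) {f : R' → R} (hf : Injective f) :
    CoversTuples t fun i => A (f i) :=
  fun r hr w => hA (f ∘ r) (hf.comp hr) w

theorem comp_cols (hA : CoversTuples t A) {e : C' → C} (he : Surjective e) :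
    CoversTuples t fun i c => A i (e c) := by
  intro r hr w
  obtain ⟨c, hc⟩ := hA r hr w
  obtain ⟨c', rfl⟩ := he c
  exact ⟨c', hc⟩

end CoversTuples

section Development

variable {ι R G X : Type*} [AddGroup R] [Group G] [MulAction G X]

variable (G) in
def developedArray (s : ι → R → X) : R → (ι × R × G) ⊕ X → X
  | x, .inl (b, j, a) => a⁻¹ • s b (x - j)
  | _, .inr y => y

theorem coversTuples_developedArray {t : ℕ} [NeZero t] {s : ι → R → X}
    (hs : ∀ r : Fin t → R, Injective r → ∀ w : Fin t → X, (∃ i j, w i ≠ w j) →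
      ∃ j : R, ∃ b : ι, ∃ a : G, ∀ i, s b (r i - j) = a • w i) :
    CoversTuples t (developedArray G s) := by
  intro r hr w
  by_cases hw : ∃ i j, w i ≠ w j
  · obtain ⟨j, b, a, hsw⟩ := hs r hr w hw
    exact ⟨.inl (b, j, a), fun i => by simp [developedArray, hsw]⟩
  · push Not at hw
    exact ⟨.inr (w 0), fun i => hw 0 i⟩

end Development

/-- If `u, v : ZMod k → X` are starter vectors, i.e. every 4-row subarray of the
`2k`-column circulant matrix built from `u` and `v` contains, for every `G`-orbit of
non-constant 4-tuples from `X`, a representative of that orbit, then there exists a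
covering array `4-CA(2·k·|G| + g, k, g)` over the alphabet `X` (with `|X| = g`). -/
theorem coveringArray_of_starter_vectors
    {G X : Type*} [Group G] [Fintype G] [Fintype X] [MulAction G X]
    (g k : ℕ) (hg : Fintype.card X = g) (hk : 4 ≤ k) (u v : ZMod k → X)
    (h : ∀ r : Fin 4 → ZMod k, Function.Injective r →
      ∀ w : Fin 4 → X, (∃ i j : Fin 4, w i ≠ w j) →
        ∃ j : ZMod k, ∃ s ∈ ({u, v} : Set (ZMod k → X)), ∃ a : G,
          ∀ i : Fin 4, s (r i - j) = a • w i) :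
    ∃ A : Fin k → Fin (2 * k * Fintype.card G + g) → X,
      IsCoveringArray4On X (2 * k * Fintype.card G + g) k A := by
  have : NeZero k := ⟨by omega⟩
  have hstart : ∀ r : Fin 4 → ZMod k, Injective r → ∀ w : Fin 4 → X, (∃ i j, w i ≠ w j) →
      ∃ j, ∃ b : Bool, ∃ a : G, ∀ i, cond b u v (r i - j) = a • w i := by
    intro r hr w hw
    obtain ⟨j, s, hs, a, hsw⟩ := h r hr w hw
    obtain ⟨b, rfl⟩ : ∃ b, cond b u v = s := by
      rcases hs with rfl | rfl
      exacts [⟨true, rfl⟩, ⟨false, rfl⟩]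
    exact ⟨j, b, a, hsw⟩
  have hcols : Fintype.card (Fin (2 * k * Fintype.card G + g)) =
      Fintype.card ((Bool × ZMod k × G) ⊕ X) := by
    simp only [Fintype.card_fin, Fintype.card_sum, Fintype.card_prod, Fintype.card_bool,
      ZMod.card, hg, mul_assoc]
  refine ⟨fun i c => developedArray G (cond · u v) (ZMod.finEquiv k i)
    (Fintype.equivOfCardEq hcols c), ?_⟩
  exact ((coversTuples_developedArray hstart).comp_rows (ZMod.finEquiv k).injective).comp_cols
    (Fintype.equivOfCardEq hcols).surjective
end

section
/- Let q be a prime power, F a finite field with |F| = q, and g = q + 1. Let X = ℙ(F²) be the projective line over F (the projectivization of the 2-dimensional vector space Fin 2 → F), with the action of GL(2,F) induced by its linear action on F². Let k ≥ 4 and let u, v : ZMod k → X be such that for every injective map r : Fin 4 → ZMod k and every non-constant tuple w : Fin 4 → X there exist j ∈ ZMod k, a vector s ∈ {u, v}, and a ∈ GL(2,F) with s(r i − j) = a • w i for all i ∈ Fin 4. Then there exists a covering array 4-CA(2·k·g·(g−1)·(g−2) + g, k, g), i.e. of size 2k(q+1)q(q−1) + q + 1 on k rows over g symbols. -/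
/-- The action of an invertible matrix `a ∈ GL(2,F)` on the projective line `ℙ(F²)`,
induced by the linear action of `a` on `F² = Fin 2 → F`. -/
noncomputable def projAct {F : Type*} [Field F] (a : GL (Fin 2) F)
    (p : Projectivization F (Fin 2 → F)) : Projectivization F (Fin 2 → F) :=
  Projectivization.map (Matrix.toLin' (a : Matrix (Fin 2) (Fin 2) F))
    (by
      have hli : Function.LeftInverse
          (Matrix.toLin' ((a⁻¹ : GL (Fin 2) F) : Matrix (Fin 2) (Fin 2) F))
          (Matrix.toLin' (a : Matrix (Fin 2) (Fin 2) F)) := by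
        intro x
        have h1 : ((a⁻¹ : GL (Fin 2) F) : Matrix (Fin 2) (Fin 2) F)
            * (a : Matrix (Fin 2) (Fin 2) F) = 1 := a.inv_mul
        rw [Matrix.toLin'_apply, Matrix.toLin'_apply, Matrix.mulVec_mulVec, h1,
          Matrix.one_mulVec]
      exact hli.injective)
    p

open Matrix MatrixGroups

section CoveringFamily

variable {ι R X : Type*}

def IsCoveringFamily (t : ℕ) (C : ι → R → X) : Prop :=
  ∀ r : Fin t → R, Function.Injective r → ∀ w : Fin t → X, ∃ c, ∀ i, C c (r i) = w i

theorem IsCoveringFamily.comp_injective {t : ℕ} {C : ι → R → X} (hC : IsCoveringFamily t C)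
    {R' : Type*} {ρ : R' → R} (hρ : Function.Injective ρ) :
    IsCoveringFamily t fun c => C c ∘ ρ :=
  fun r hr w => hC (ρ ∘ r) (hρ.comp hr) w

theorem IsCoveringFamily.exists_isCoveringArray4On [Finite ι] [Nonempty ι] {n k : ℕ}
    {C : ι → Fin k → X} (hC : IsCoveringFamily 4 C) (hn : Nat.card ι ≤ n) :
    ∃ A, IsCoveringArray4On X n k A := by
  have := Fintype.ofFinite ι
  obtain ⟨e⟩ := Function.Embedding.nonempty_of_card_le (α := ι) (β := Fin n)
    (by rwa [Fintype.card_fin, ← Nat.card_eq_fintype_card])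
  refine ⟨fun i c => C (Function.invFun e c) i, fun r hr w => ?_⟩
  obtain ⟨c, hc⟩ := hC r hr w
  exact ⟨e c, by simpa only [Function.leftInverse_invFun e.injective c] using hc⟩

end CoveringFamily

section Starter

variable (G : Type*) {Z X : Type*} [Group G] [MulAction G X] [AddGroup Z]

def IsStarterSet (t : ℕ) (S : Set (Z → X)) : Prop :=
  ∀ r : Fin t → Z, Function.Injective r → ∀ w : Fin t → X, (∃ i j, w i ≠ w j) →
    ∃ j : Z, ∃ s ∈ S, ∃ g : G, ∀ i, s (r i - j) = g • w i

def starterColumn (S : Set (Z → X)) : (S × Z × G) ⊕ X → Z → X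
  | .inl (s, j, g) => fun z => g⁻¹ • (s : Z → X) (z - j)
  | .inr x => fun _ => x

variable {G}

theorem IsStarterSet.isCoveringFamily_starterColumn {t : ℕ} [NeZero t] {S : Set (Z → X)}
    (hS : IsStarterSet G t S) : IsCoveringFamily t (starterColumn G S) := by
  intro r hr w
  by_cases hw : ∃ i j, w i ≠ w j
  · obtain ⟨j, s, hs, g, hg⟩ := hS r hr w hw
    exact ⟨.inl (⟨s, hs⟩, j, g), fun i => by simp [starterColumn, hg]⟩
  · push Not at hw
    exact ⟨.inr (w 0), fun i => hw 0 i⟩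

end Starter

namespace Matrix.ProjGenLinGroup

instance finite (n R : Type*) [Fintype n] [DecidableEq n] [CommRing R] [Finite R] :
    Finite PGL(n, R) :=
  inferInstanceAs (Finite (GL n R ⧸ Subgroup.center (GL n R)))

theorem card_GL_eq_card_mul_card_units (n R : Type*) [Fintype n] [DecidableEq n] [Nonempty n]
    [CommRing R] :
    Nat.card (GL n R) = Nat.card PGL(n, R) * Nat.card Rˣ := by
  have hscalar : Function.Injective (GeneralLinearGroup.scalar n (R := R)) := fun u v huv => by
    simpa [Units.ext_iff] using huv
  have hcenter : Nat.card (Subgroup.center (GL n R)) = Nat.card Rˣ := by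
    rw [GeneralLinearGroup.center_eq_range_scalar]
    exact (Nat.card_congr (MonoidHom.ofInjective hscalar).toEquiv).symm
  rw [Subgroup.card_eq_card_quotient_mul_card_subgroup (Subgroup.center (GL n R)), hcenter]
  rfl

theorem card_PGL_two (F : Type*) [Field F] [Fintype F] :
    Nat.card PGL(2, F) = (Fintype.card F + 1) * Fintype.card F * (Fintype.card F - 1) := by
  have hq : 1 < Fintype.card F := Fintype.one_lt_card
  have hGL := card_GL_eq_card_mul_card_units (Fin 2) F
  rw [card_GL_field, Fin.prod_univ_two, Nat.card_units, Nat.card_eq_fintype_card (α := F)] at hGL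
  generalize Fintype.card F = q at hq hGL ⊢
  refine Nat.eq_of_mul_eq_mul_right (by omega : 0 < q - 1) (hGL.symm.trans ?_)
  have hq2 : q ≤ q ^ 2 := Nat.le_self_pow two_ne_zero q
  simp only [Fin.val_zero, Fin.val_one, pow_zero, pow_one]
  zify [hq.le, hq2, hq.le.trans hq2]
  ring

end Matrix.ProjGenLinGroup

theorem projAct_eq_smul {F : Type*} [Field F] (a : GL (Fin 2) F)
    (p : Projectivization F (Fin 2 → F)) : projAct a p = ProjGenLinGroup.mk a • p := by
  induction p using Projectivization.ind with
  | h v hv => rfl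

theorem card_projectiveLine (F : Type*) [Field F] [Fintype F] :
    Nat.card (Projectivization F (Fin 2 → F)) = Fintype.card F + 1 := by
  rw [Projectivization.card_of_finrank F (Fin 2 → F) (Module.finrank_fin_fun F),
    Finset.sum_range_succ, Finset.sum_range_one, Nat.card_eq_fintype_card]
  ring

theorem coveringArray_of_starter_vectors_PGL_general
    (q : ℕ) (F : Type*) [Field F] [Fintype F]
    (hF : Fintype.card F = q) (k : ℕ) (hk : 4 ≤ k)
    (u v : ZMod k → Projectivization F (Fin 2 → F))
    (h : ∀ r : Fin 4 → ZMod k, Function.Injective r →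
      ∀ w : Fin 4 → Projectivization F (Fin 2 → F), (∃ i j : Fin 4, w i ≠ w j) →
        ∃ j : ZMod k,
          ∃ s ∈ ({u, v} : Set (ZMod k → Projectivization F (Fin 2 → F))),
            ∃ a : GL (Fin 2) F, ∀ i : Fin 4, s (r i - j) = projAct a (w i)) :
    ∃ A : Fin k → Fin (2 * k * (q + 1) * q * (q - 1) + (q + 1)) →
        Projectivization F (Fin 2 → F),
      IsCoveringArray4On (Projectivization F (Fin 2 → F))
        (2 * k * (q + 1) * q * (q - 1) + (q + 1)) k A := by
  have : NeZero k := ⟨by omega⟩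
  have hS : IsStarterSet PGL(2, F) 4 {u, v} := fun r hr w hw => by
    obtain ⟨j, s, hs, a, ha⟩ := h r hr w hw
    exact ⟨j, s, hs, ProjGenLinGroup.mk a, fun i => (ha i).trans (projAct_eq_smul a (w i))⟩
  refine (hS.isCoveringFamily_starterColumn.comp_injective
    (ZMod.finEquiv k).injective).exists_isCoveringArray4On ?_
  have hpair : Nat.card ({u, v} : Set (ZMod k → Projectivization F (Fin 2 → F))) ≤ 2 := by
    rw [Nat.card_coe_set_eq]
    exact (Set.ncard_insert_le _ _).trans (by rw [Set.ncard_singleton])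
  rw [Nat.card_sum, Nat.card_prod, Nat.card_prod, Nat.card_zmod,
    ProjGenLinGroup.card_PGL_two, card_projectiveLine, hF]
  calc _ ≤ 2 * (k * ((q + 1) * q * (q - 1))) + (q + 1) := by gcongr
    _ = _ := by ring

/-- If `u, v : ZMod k → ℙ(F²)` are starter vectors with respect to the action of
`GL(2,F)` on the projective line over a field with `q` elements, then there exists a
covering array `4-CA(2·k·g·(g-1)·(g-2) + g, k, g)` with `g = q + 1`, i.e. of size
`2k(q+1)q(q-1) + q + 1` on `k` rows over the `g` symbols of the projective line. -/
theorem coveringArray_of_starter_vectors_PGL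
    (q : ℕ) (hq : IsPrimePow q) (F : Type*) [Field F] [Fintype F]
    (hF : Fintype.card F = q) (k : ℕ) (hk : 4 ≤ k)
    (u v : ZMod k → Projectivization F (Fin 2 → F))
    (h : ∀ r : Fin 4 → ZMod k, Function.Injective r →
      ∀ w : Fin 4 → Projectivization F (Fin 2 → F), (∃ i j : Fin 4, w i ≠ w j) →
        ∃ j : ZMod k,
          ∃ s ∈ ({u, v} : Set (ZMod k → Projectivization F (Fin 2 → F))),
            ∃ a : GL (Fin 2) F, ∀ i : Fin 4, s (r i - j) = projAct a (w i)) :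
    ∃ A : Fin k → Fin (2 * k * (q + 1) * q * (q - 1) + (q + 1)) →
        Projectivization F (Fin 2 → F),
      IsCoveringArray4On (Projectivization F (Fin 2 → F))
        (2 * k * (q + 1) * q * (q - 1) + (q + 1)) k A :=
  coveringArray_of_starter_vectors_PGL_general q F hF k hk u v h
end
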